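/- The map ψ induces a bijection from Γ∞\SL₂(ℤ) × Γ∞\SL₂(ℤ) onto M₀/{±1}. Concretely: (a) for every N ∈ M₀ there exist A, B ∈ SL₂(ℤ) with N = ψ(A,B) or N = −ψ(A,B); (b) for A, B, C, D ∈ SL₂(ℤ), ψ(A,B) = ±ψ(C,D) holds if and only if A·C⁻¹ ∈ Γ∞ and B·D⁻¹ ∈ Γ∞. -/

import Mathlib

open Matrix

lemma coprime_row (A : Matrix.SpecialLinearGroup (Fin 2) ℤ) :
    IsCoprime ((A : Matrix (Fin 2) (Fin 2) ℤ) 1 0) ((A : Matrix (Fin 2) (Fin 2) ℤ) 1 1) := by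
  refine ⟨-((A : Matrix (Fin 2) (Fin 2) ℤ) 0 1), (A : Matrix (Fin 2) (Fin 2) ℤ) 0 0, ?_⟩
  have h := A.property
  rw [Matrix.det_fin_two] at h
  linarith

lemma exists_sl2 (r s : ℤ) (h : IsCoprime r s) :
    ∃ A : Matrix.SpecialLinearGroup (Fin 2) ℤ,
      (A : Matrix (Fin 2) (Fin 2) ℤ) 1 0 = r ∧ (A : Matrix (Fin 2) (Fin 2) ℤ) 1 1 = s := by
  obtain ⟨x, y, hxy⟩ := h
  refine ⟨⟨!![y, -x; r, s], ?_⟩, ?_, ?_⟩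
  · rw [Matrix.det_fin_two_of]; linarith
  · simp
  · simp

lemma prop_sign {r s p q : ℤ} (hrs : IsCoprime r s) (hpq : IsCoprime p q)
    (h : r * q = s * p) : (p = r ∧ q = s) ∨ (p = -r ∧ q = -s) := by
  obtain ⟨x, y, hxy⟩ := hrs
  obtain ⟨x', y', hxy'⟩ := hpq
  have hp : (x * p + y * q) * r = p := by linear_combination y * h + p * hxy
  have hq : (x * p + y * q) * s = q := by linear_combination (-x) * h + q * hxy
  have hr : (x' * r + y' * s) * p = r := by linear_combination (-y') * h + r * hxy'
  have hs : (x' * r + y' * s) * q = s := by linear_combination x' * h + s * hxy'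
  set e := x * p + y * q
  set f := x' * r + y' * s
  have h1 : (e * f - 1) * r = 0 := by linear_combination f * hp + hr
  have h2 : (e * f - 1) * s = 0 := by linear_combination f * hq + hs
  have hef : e * f = 1 := by linear_combination x * h1 + y * h2 - (e * f - 1) * hxy
  rcases Int.eq_one_or_neg_one_of_mul_eq_one' hef with ⟨he, _⟩ | ⟨he, _⟩
  · left; rw [he] at hp hq; constructor <;> linarith
  · right; rw [he] at hp hq; constructor <;> linarith

lemma lower_left (A C : Matrix.SpecialLinearGroup (Fin 2) ℤ) :
    ((A * C⁻¹ : Matrix.SpecialLinearGroup (Fin 2) ℤ) : Matrix (Fin 2) (Fin 2) ℤ) 1 0 =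
      (A : Matrix (Fin 2) (Fin 2) ℤ) 1 0 * (C : Matrix (Fin 2) (Fin 2) ℤ) 1 1 -
      (A : Matrix (Fin 2) (Fin 2) ℤ) 1 1 * (C : Matrix (Fin 2) (Fin 2) ℤ) 1 0 := by
  rw [Matrix.SpecialLinearGroup.coe_mul, Matrix.SpecialLinearGroup.coe_inv,
    Matrix.adjugate_fin_two]
  rw [Matrix.mul_apply, Fin.sum_univ_two]
  simp
  ring


/-- `ψ(A,B) = ((r·u, s·u),(r·t, s·t))` where `(r,s)` and `(t,u)` are the bottom rows of
`A` and `B` respectively. -/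
def psi (A B : Matrix (Fin 2) (Fin 2) ℤ) : Matrix (Fin 2) (Fin 2) ℤ :=
  !![A 1 0 * B 1 1, A 1 1 * B 1 1; A 1 0 * B 1 0, A 1 1 * B 1 0]

/-- The map `ψ` induces a bijection from `Γ∞\SL₂(ℤ) × Γ∞\SL₂(ℤ)` onto
`M₀/{±1}`:
(a) every `N ∈ M₀` (i.e. `det N = 0` and the entries of `N` have gcd `1`) satisfies
`N = ψ(A,B)` or `N = −ψ(A,B)` for some `A, B ∈ SL₂(ℤ)`;
(b) `ψ(A,B) = ±ψ(C,D)` holds iff `A·C⁻¹ ∈ Γ∞` and `B·D⁻¹ ∈ Γ∞` (membership in the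
subgroup `Γ∞` of upper triangular matrices being the vanishing of the lower-left entry). -/
theorem psi_bijection :
    (∀ N : Matrix (Fin 2) (Fin 2) ℤ, N.det = 0 →
      Int.gcd (Int.gcd (N 0 0) (N 0 1)) (Int.gcd (N 1 0) (N 1 1)) = 1 →
      ∃ A B : Matrix.SpecialLinearGroup (Fin 2) ℤ,
        N = psi (A : Matrix (Fin 2) (Fin 2) ℤ) (B : Matrix (Fin 2) (Fin 2) ℤ) ∨
        N = -psi (A : Matrix (Fin 2) (Fin 2) ℤ) (B : Matrix (Fin 2) (Fin 2) ℤ)) ∧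
    (∀ A B C D : Matrix.SpecialLinearGroup (Fin 2) ℤ,
      (psi (A : Matrix (Fin 2) (Fin 2) ℤ) (B : Matrix (Fin 2) (Fin 2) ℤ) =
          psi (C : Matrix (Fin 2) (Fin 2) ℤ) (D : Matrix (Fin 2) (Fin 2) ℤ) ∨
        psi (A : Matrix (Fin 2) (Fin 2) ℤ) (B : Matrix (Fin 2) (Fin 2) ℤ) =
          -psi (C : Matrix (Fin 2) (Fin 2) ℤ) (D : Matrix (Fin 2) (Fin 2) ℤ)) ↔
      (((A * C⁻¹ : Matrix.SpecialLinearGroup (Fin 2) ℤ) : Matrix (Fin 2) (Fin 2) ℤ) 1 0 = 0 ∧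
       ((B * D⁻¹ : Matrix.SpecialLinearGroup (Fin 2) ℤ) : Matrix (Fin 2) (Fin 2) ℤ) 1 0 = 0)) := by
  constructor
  · intro N hdet hgcd
    rw [Matrix.det_fin_two] at hdet
    by_cases h0 : N 0 0 = 0 ∧ N 0 1 = 0
    · obtain ⟨ha0, hb0⟩ := h0
      have hcd : Int.gcd (N 1 0) (N 1 1) = 1 := by
        simpa [ha0, hb0] using hgcd
      obtain ⟨A, hA1, hA2⟩ := exists_sl2 (N 1 0) (N 1 1) (Int.isCoprime_iff_gcd_eq_one.mpr hcd)
      obtain ⟨B, hB1, hB2⟩ := exists_sl2 1 0 isCoprime_one_left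
      refine ⟨A, B, Or.inl ?_⟩
      ext i j
      fin_cases i <;> fin_cases j <;> simp [psi, hA1, hA2, hB1, hB2, ha0, hb0]
    · have hab : Int.gcd (N 0 0) (N 0 1) ≠ 0 := by
        intro hg
        rcases Int.gcd_eq_zero_iff.mp hg with ⟨h1, h2⟩
        exact h0 ⟨h1, h2⟩
      set u : ℤ := (Int.gcd (N 0 0) (N 0 1) : ℤ) with hu_def
      have hu : u ≠ 0 := by rw [hu_def]; exact_mod_cast hab
      set r : ℤ := N 0 0 / u with hr_def
      set s : ℤ := N 0 1 / u with hs_def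
      have har : N 0 0 = r * u := by
        rw [hr_def, Int.ediv_mul_cancel (Int.gcd_dvd_left _ _)]
      have hbs : N 0 1 = s * u := by
        rw [hs_def, Int.ediv_mul_cancel (Int.gcd_dvd_right _ _)]
      have hrs : IsCoprime r s := by
        rw [Int.isCoprime_iff_gcd_eq_one]
        exact Int.gcd_div_gcd_div_gcd (Nat.pos_of_ne_zero hab)
      obtain ⟨x, y, hxy⟩ := hrs
      set t : ℤ := x * N 1 0 + y * N 1 1 with ht_def
      have hrd : u * (r * N 1 1) = u * (s * N 1 0) := by
        linear_combination hdet - N 1 1 * har + N 1 0 * hbs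
      have hrd' : r * N 1 1 = s * N 1 0 := mul_left_cancel₀ hu hrd
      have hc : r * t = N 1 0 := by
        rw [ht_def]; linear_combination y * hrd' + N 1 0 * hxy
      have hd : s * t = N 1 1 := by
        rw [ht_def]; linear_combination (-x) * hrd' + N 1 1 * hxy
      have htu : IsCoprime t u := by
        rw [Int.isCoprime_iff_gcd_eq_one]
        have h7 : (Int.gcd t u : ℤ) ∣ (Int.gcd (N 1 0) (N 1 1) : ℤ) := by
          apply Int.dvd_coe_gcd
          · exact dvd_trans (Int.gcd_dvd_left _ _) ⟨r, by linarith [hc]⟩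
          · exact dvd_trans (Int.gcd_dvd_left _ _) ⟨s, by linarith [hd]⟩
        have h8 : (Int.gcd t u : ℤ) ∣ u := Int.gcd_dvd_right _ _
        have h9 : Int.gcd t u ∣ Int.gcd (N 1 0) (N 1 1) := by exact_mod_cast h7
        have h10 : Int.gcd t u ∣ Int.gcd (N 0 0) (N 0 1) := by
          rw [hu_def] at h8; exact_mod_cast h8
        have h11 : Nat.gcd (Int.gcd (N 0 0) (N 0 1)) (Int.gcd (N 1 0) (N 1 1)) = 1 := by
          rw [← Int.gcd_natCast_natCast]; exact hgcd
        exact Nat.dvd_one.mp (h11 ▸ Nat.dvd_gcd h10 h9)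
      obtain ⟨A, hA1, hA2⟩ := exists_sl2 r s ⟨x, y, hxy⟩
      obtain ⟨B, hB1, hB2⟩ := exists_sl2 t u htu
      refine ⟨A, B, Or.inl ?_⟩
      ext i j
      fin_cases i <;> fin_cases j <;>
        simp [psi, hA1, hA2, hB1, hB2] <;> linarith [har, hbs, hc, hd]
  · intro A B C D
    obtain ⟨xa, ya, hA⟩ := coprime_row A
    obtain ⟨xc, yc, hC⟩ := coprime_row C
    obtain ⟨xd, yd, hD⟩ := coprime_row D
    rw [lower_left, lower_left]
    constructor
    · rintro (h | h)
      · have e1 := congrFun (congrFun h 0) 0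
        have e2 := congrFun (congrFun h 0) 1
        have e3 := congrFun (congrFun h 1) 0
        have e4 := congrFun (congrFun h 1) 1
        simp [psi] at e1 e2 e3 e4
        have hv : (D : Matrix (Fin 2) (Fin 2) ℤ) 1 0 * ((A : Matrix (Fin 2) (Fin 2) ℤ) 1 1 * (C : Matrix (Fin 2) (Fin 2) ℤ) 1 0 - (A : Matrix (Fin 2) (Fin 2) ℤ) 1 0 * (C : Matrix (Fin 2) (Fin 2) ℤ) 1 1) = 0 := by
          linear_combination ((A : Matrix (Fin 2) (Fin 2) ℤ) 1 0) * e4 - ((A : Matrix (Fin 2) (Fin 2) ℤ) 1 1) * e3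
        have hw : (D : Matrix (Fin 2) (Fin 2) ℤ) 1 1 * ((A : Matrix (Fin 2) (Fin 2) ℤ) 1 1 * (C : Matrix (Fin 2) (Fin 2) ℤ) 1 0 - (A : Matrix (Fin 2) (Fin 2) ℤ) 1 0 * (C : Matrix (Fin 2) (Fin 2) ℤ) 1 1) = 0 := by
          linear_combination ((A : Matrix (Fin 2) (Fin 2) ℤ) 1 0) * e2 - ((A : Matrix (Fin 2) (Fin 2) ℤ) 1 1) * e1
        have ht : (A : Matrix (Fin 2) (Fin 2) ℤ) 1 0 * ((B : Matrix (Fin 2) (Fin 2) ℤ) 1 0 * (D : Matrix (Fin 2) (Fin 2) ℤ) 1 1 - (B : Matrix (Fin 2) (Fin 2) ℤ) 1 1 * (D : Matrix (Fin 2) (Fin 2) ℤ) 1 0) = 0 := by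
          linear_combination ((D : Matrix (Fin 2) (Fin 2) ℤ) 1 1) * e3 - ((D : Matrix (Fin 2) (Fin 2) ℤ) 1 0) * e1
        have hs : (A : Matrix (Fin 2) (Fin 2) ℤ) 1 1 * ((B : Matrix (Fin 2) (Fin 2) ℤ) 1 0 * (D : Matrix (Fin 2) (Fin 2) ℤ) 1 1 - (B : Matrix (Fin 2) (Fin 2) ℤ) 1 1 * (D : Matrix (Fin 2) (Fin 2) ℤ) 1 0) = 0 := by
          linear_combination ((D : Matrix (Fin 2) (Fin 2) ℤ) 1 1) * e4 - ((D : Matrix (Fin 2) (Fin 2) ℤ) 1 0) * e2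
        constructor
        · linear_combination (-xd) * hv + (-yd) * hw + ((A : Matrix (Fin 2) (Fin 2) ℤ) 1 1 * (C : Matrix (Fin 2) (Fin 2) ℤ) 1 0 - (A : Matrix (Fin 2) (Fin 2) ℤ) 1 0 * (C : Matrix (Fin 2) (Fin 2) ℤ) 1 1) * hD
        · linear_combination xa * ht + ya * hs - ((B : Matrix (Fin 2) (Fin 2) ℤ) 1 0 * (D : Matrix (Fin 2) (Fin 2) ℤ) 1 1 - (B : Matrix (Fin 2) (Fin 2) ℤ) 1 1 * (D : Matrix (Fin 2) (Fin 2) ℤ) 1 0) * hA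
      · have e1 := congrFun (congrFun h 0) 0
        have e2 := congrFun (congrFun h 0) 1
        have e3 := congrFun (congrFun h 1) 0
        have e4 := congrFun (congrFun h 1) 1
        simp [psi] at e1 e2 e3 e4
        have hv : (D : Matrix (Fin 2) (Fin 2) ℤ) 1 0 * ((A : Matrix (Fin 2) (Fin 2) ℤ) 1 1 * (C : Matrix (Fin 2) (Fin 2) ℤ) 1 0 - (A : Matrix (Fin 2) (Fin 2) ℤ) 1 0 * (C : Matrix (Fin 2) (Fin 2) ℤ) 1 1) = 0 := by
          linear_combination ((A : Matrix (Fin 2) (Fin 2) ℤ) 1 1) * e3 - ((A : Matrix (Fin 2) (Fin 2) ℤ) 1 0) * e4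
        have hw : (D : Matrix (Fin 2) (Fin 2) ℤ) 1 1 * ((A : Matrix (Fin 2) (Fin 2) ℤ) 1 1 * (C : Matrix (Fin 2) (Fin 2) ℤ) 1 0 - (A : Matrix (Fin 2) (Fin 2) ℤ) 1 0 * (C : Matrix (Fin 2) (Fin 2) ℤ) 1 1) = 0 := by
          linear_combination ((A : Matrix (Fin 2) (Fin 2) ℤ) 1 1) * e1 - ((A : Matrix (Fin 2) (Fin 2) ℤ) 1 0) * e2
        have ht : (A : Matrix (Fin 2) (Fin 2) ℤ) 1 0 * ((B : Matrix (Fin 2) (Fin 2) ℤ) 1 0 * (D : Matrix (Fin 2) (Fin 2) ℤ) 1 1 - (B : Matrix (Fin 2) (Fin 2) ℤ) 1 1 * (D : Matrix (Fin 2) (Fin 2) ℤ) 1 0) = 0 := by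
          linear_combination ((D : Matrix (Fin 2) (Fin 2) ℤ) 1 1) * e3 - ((D : Matrix (Fin 2) (Fin 2) ℤ) 1 0) * e1
        have hs : (A : Matrix (Fin 2) (Fin 2) ℤ) 1 1 * ((B : Matrix (Fin 2) (Fin 2) ℤ) 1 0 * (D : Matrix (Fin 2) (Fin 2) ℤ) 1 1 - (B : Matrix (Fin 2) (Fin 2) ℤ) 1 1 * (D : Matrix (Fin 2) (Fin 2) ℤ) 1 0) = 0 := by
          linear_combination ((D : Matrix (Fin 2) (Fin 2) ℤ) 1 1) * e4 - ((D : Matrix (Fin 2) (Fin 2) ℤ) 1 0) * e2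
        constructor
        · linear_combination (-xd) * hv + (-yd) * hw + ((A : Matrix (Fin 2) (Fin 2) ℤ) 1 1 * (C : Matrix (Fin 2) (Fin 2) ℤ) 1 0 - (A : Matrix (Fin 2) (Fin 2) ℤ) 1 0 * (C : Matrix (Fin 2) (Fin 2) ℤ) 1 1) * hD
        · linear_combination xa * ht + ya * hs - ((B : Matrix (Fin 2) (Fin 2) ℤ) 1 0 * (D : Matrix (Fin 2) (Fin 2) ℤ) 1 1 - (B : Matrix (Fin 2) (Fin 2) ℤ) 1 1 * (D : Matrix (Fin 2) (Fin 2) ℤ) 1 0) * hA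
    · rintro ⟨h1, h2⟩
      have k1 : (A : Matrix (Fin 2) (Fin 2) ℤ) 1 0 * (C : Matrix (Fin 2) (Fin 2) ℤ) 1 1 =
          (A : Matrix (Fin 2) (Fin 2) ℤ) 1 1 * (C : Matrix (Fin 2) (Fin 2) ℤ) 1 0 := by linarith
      have k2 : (B : Matrix (Fin 2) (Fin 2) ℤ) 1 0 * (D : Matrix (Fin 2) (Fin 2) ℤ) 1 1 =
          (B : Matrix (Fin 2) (Fin 2) ℤ) 1 1 * (D : Matrix (Fin 2) (Fin 2) ℤ) 1 0 := by linarith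
      rcases prop_sign (coprime_row A) (coprime_row C) k1 with ⟨p1, p2⟩ | ⟨p1, p2⟩ <;>
        rcases prop_sign (coprime_row B) (coprime_row D) k2 with ⟨q1, q2⟩ | ⟨q1, q2⟩
      · left; ext i j; fin_cases i <;> fin_cases j <;> simp [psi, p1, p2, q1, q2]
      · right; ext i j; fin_cases i <;> fin_cases j <;> simp [psi, p1, p2, q1, q2]
      · right; ext i j; fin_cases i <;> fin_cases j <;> simp [psi, p1, p2, q1, q2]
      · left; ext i j; fin_cases i <;> fin_cases j <;> simp [psi, p1, p2, q1, q2]
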